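/- arXiv:1804.11235 — 2 statements merged into one kernel-verified Lean document; each statement's English description precedes it below -/
import Mathlib

section
/- In a free group F, two nontrivial elements x and y commute if and only if there exist nonzero integers c and d such that x^c = y^d. -/
/-!
Commuting elements `x, y` of a free group generate a commutative subgroup, which is free by
Nielsen–Schreier, hence of rank at most one, i.e. cyclic: `x` and `y` are powers of a common
element. Conversely, if `x ^ c = y ^ d ≠ 1`, this element is central in the free group
`⟨x, y⟩`. A free group of rank at least two has trivial centre (an element commuting with two
basis elements `a, b` would have a common power with both, forcing `a ^ p = b ^ q`), so `⟨x, y⟩`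
is cyclic and `x, y` commute.
-/

universe u

namespace FreeGroup

variable {ι : Type*}

theorem eq_of_commute_of {i j : ι} (h : Commute (of i) (of j)) : i = j := by
  classical
  have hword := congrArg toWord h.eq
  simp only [toWord_mul, toWord_of] at hword
  exact (by simpa using hword : i = j ∧ j = i).1

theorem eq_of_zpow_of_eq_zpow_of {i j : ι} {p q : ℤ} (hp : p ≠ 0) (h : of i ^ p = of j ^ q) :
    i = j := by
  classical
  by_contra hij
  -- the exponent sum of the generator `i`
  have hsum := congrArg (lift (Pi.mulSingle i (Multiplicative.ofAdd (1 : ℤ)))) h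
  simp only [map_zpow, lift_apply_of, Pi.mulSingle_eq_same, Pi.mulSingle_eq_of_ne (Ne.symm hij),
    one_zpow] at hsum
  exact hp (by simpa using hsum)

theorem isCyclic_of_subsingleton [Subsingleton ι] : IsCyclic (FreeGroup ι) := by
  rcases isEmpty_or_nonempty ι with hι | hι
  · exact _root_.isCyclic_of_subsingleton
  · have : Unique ι := uniqueOfSubsingleton hι.some
    infer_instance

end FreeGroup

namespace IsFreeGroup

variable {G : Type u} [Group G] [IsFreeGroup G]

theorem isCyclic_of_subsingleton_generators [Subsingleton (Generators G)] : IsCyclic G :=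
  have := FreeGroup.isCyclic_of_subsingleton (ι := Generators G)
  isCyclic_of_surjective (mulEquiv G) (mulEquiv G).surjective

theorem isCyclic_of_isMulCommutative [IsMulCommutative G] : IsCyclic G := by
  have : Subsingleton (Generators G) := ⟨fun i j => FreeGroup.eq_of_commute_of <| by
    have hij : Commute (mulEquiv G (.of i)) (mulEquiv G (.of j)) := mul_comm' _ _
    simpa using hij.map (mulEquiv G).symm⟩
  exact isCyclic_of_subsingleton_generators

theorem exists_zpow_eq_of_commute {x y : G} (h : Commute x y) :
    ∃ z : G, ∃ m n : ℤ, x = z ^ m ∧ y = z ^ n := by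
  set H := Subgroup.closure ({x, y} : Set G)
  have : IsMulCommutative H := Subgroup.isMulCommutative_closure <| by
    simp only [Set.mem_insert_iff, Set.mem_singleton_iff]
    rintro a (rfl | rfl) b (rfl | rfl)
    exacts [rfl, h.eq, h.symm.eq, rfl]
  have : IsCyclic H := isCyclic_of_isMulCommutative
  obtain ⟨z, hz⟩ := IsCyclic.exists_generator (α := H)
  obtain ⟨m, hm⟩ := hz ⟨x, Subgroup.subset_closure (by simp)⟩
  obtain ⟨n, hn⟩ := hz ⟨y, Subgroup.subset_closure (by simp)⟩
  exact ⟨z, m, n, by simpa using congrArg Subtype.val hm.symm,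
    by simpa using congrArg Subtype.val hn.symm⟩

theorem exists_zpow_eq_zpow_of_commute {x y : G} (hx : x ≠ 1) (hy : y ≠ 1) (h : Commute x y) :
    ∃ c d : ℤ, c ≠ 0 ∧ d ≠ 0 ∧ x ^ c = y ^ d := by
  obtain ⟨z, m, n, rfl, rfl⟩ := exists_zpow_eq_of_commute h
  refine ⟨n, m, ?_, ?_, by rw [← zpow_mul, ← zpow_mul, mul_comm]⟩
  · rintro rfl; simp at hy
  · rintro rfl; simp at hx

end IsFreeGroup

theorem FreeGroup.eq_one_of_commute_of_commute_of {ι : Type u} {i j : ι} (hij : i ≠ j)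
    {w : FreeGroup ι} (hi : Commute w (of i)) (hj : Commute w (of j)) : w = 1 := by
  by_contra hw
  obtain ⟨c, d, hc, hd, hcd⟩ :=
    IsFreeGroup.exists_zpow_eq_zpow_of_commute hw (of_ne_one i) hi
  obtain ⟨c', d', hc', -, hcd'⟩ :=
    IsFreeGroup.exists_zpow_eq_zpow_of_commute hw (of_ne_one j) hj
  refine hij (eq_of_zpow_of_eq_zpow_of (q := d' * c) (mul_ne_zero hd hc') ?_)
  calc of i ^ (d * c') = (w ^ c) ^ c' := by rw [zpow_mul, hcd]
    _ = (w ^ c') ^ c := by rw [← zpow_mul, mul_comm, zpow_mul]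
    _ = of j ^ (d' * c) := by rw [hcd', zpow_mul]

namespace IsFreeGroup

variable {G : Type u} [Group G] [IsFreeGroup G]

theorem isMulCommutative_of_center_ne_bot (h : Subgroup.center G ≠ ⊥) : IsMulCommutative G := by
  obtain ⟨⟨g, hg⟩, hg1⟩ := Subgroup.ne_bot_iff_exists_ne_one.1 h
  have hcomm (i : Generators G) : Commute (toFreeGroup G g) (FreeGroup.of i) := by
    have hcomm' : Commute ((toFreeGroup G).symm (FreeGroup.of i)) g := Subgroup.mem_center_iff.1 hg _
    simpa using hcomm'.symm.map (toFreeGroup G)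
  have hw : toFreeGroup G g ≠ 1 := by simpa using hg1
  have : Subsingleton (Generators G) := ⟨fun i j => by
    by_contra hij
    exact hw (FreeGroup.eq_one_of_commute_of_commute_of hij (hcomm i) (hcomm j))⟩
  have : IsCyclic G := isCyclic_of_subsingleton_generators
  infer_instance

end IsFreeGroup

theorem FreeGroup.commute_of_zpow_eq_zpow {α : Type u} {x y : FreeGroup α} (hx : x ≠ 1) {c d : ℤ}
    (hc : c ≠ 0) (h : x ^ c = y ^ d) : Commute x y := by
  set K := Subgroup.closure ({x, y} : Set (FreeGroup α))
  have hxK : x ∈ K := Subgroup.subset_closure (by simp)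
  have hyK : y ∈ K := Subgroup.subset_closure (by simp)
  have hcentral : (⟨x ^ c, K.zpow_mem hxK c⟩ : K) ∈ Subgroup.center K := by
    have hle : K ≤ Subgroup.centralizer {x ^ c} := by
      rw [Subgroup.closure_le]
      simp only [Set.insert_subset_iff, Set.singleton_subset_iff, SetLike.mem_coe,
        Subgroup.mem_centralizer_singleton_iff]
      exact ⟨(Commute.self_zpow x c).eq, (h ▸ Commute.self_zpow y d).eq⟩
    refine Subgroup.mem_center_iff.2 fun k => Subtype.ext ?_
    exact Subgroup.mem_centralizer_singleton_iff.1 (hle k.2)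
  have hne : Subgroup.center K ≠ ⊥ := Subgroup.ne_bot_iff_exists_ne_one.2
    ⟨⟨_, hcentral⟩, fun h1 => hx <| (IsMulTorsionFree.zpow_eq_one_iff_left hc).1 <| by
      simpa using congrArg (fun k : Subgroup.center K => ((k : K) : FreeGroup α)) h1⟩
  have := IsFreeGroup.isMulCommutative_of_center_ne_bot hne
  exact congrArg Subtype.val (mul_comm' (⟨x, hxK⟩ : K) ⟨y, hyK⟩)

/-- In a free group, two nontrivial elements `x` and `y` commute if and only if there exist
nonzero integers `c`, `d` such that `x^c = y^d`. -/
theorem stmt2 {α : Type*} (x y : FreeGroup α) (hx : x ≠ 1) (hy : y ≠ 1) :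
    Commute x y ↔ ∃ c d : ℤ, c ≠ 0 ∧ d ≠ 0 ∧ x ^ c = y ^ d := by
  constructor
  · exact IsFreeGroup.exists_zpow_eq_zpow_of_commute hx hy
  · rintro ⟨c, d, hc, -, h⟩
    exact FreeGroup.commute_of_zpow_eq_zpow hx hc h
end

section
/- Let h and f be commuting homeomorphism-isotopy classes (mapping classes) of a finite-type surface S, each reducible with canonical reduction systems CRS(h) and CRS(f). Then no curve of CRS(h) intersects any curve of CRS(f) with nonzero geometric intersection number. -/
/-- If `h` and `f` are commuting mapping classes of a finite-type surface, then no curve of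
`CRS(h)` intersects any curve of `CRS(f)`.  Formalized abstractly: `M` is the mapping class
group acting on the set `C` of isotopy classes of essential simple closed curves, `i` is the
geometric intersection number, and `CRS` satisfies its standard properties: naturality under
conjugation, invariance under nonzero powers, and the key property that no power of `h`
fixes a curve intersecting `CRS(h)`. -/
theorem stmt8 {M C : Type*} [Group M] [MulAction M C] [DecidableEq C]
    (i : C → C → ℕ) (hisymm : ∀ a b, i a b = i b a)
    (CRS : M → Finset C)
    (hconj : ∀ g f : M, CRS (g * f * g⁻¹) = (CRS f).image (fun c => g • c))
    (hpow : ∀ (f : M) (n : ℤ), n ≠ 0 → CRS (f ^ n) = CRS f)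
    (hkey : ∀ (h : M) (γ : C), (∃ δ ∈ CRS h, i γ δ ≠ 0) →
      ∀ n : ℤ, n ≠ 0 → (h ^ n) • γ ≠ γ)
    (h f : M) (hcomm : Commute h f) :
    ∀ a ∈ CRS h, ∀ b ∈ CRS f, i a b = 0 := by
  intro a ha b hb
  by_contra hib
  -- f preserves CRS h since they commute
  have hfix : (CRS h).image (fun c => f • c) = CRS h := by
    rw [← hconj f h]
    congr 1
    rw [mul_inv_eq_iff_eq_mul]
    exact hcomm.eq.symm
  have hmem : ∀ j : ℕ, (f ^ j) • a ∈ CRS h := by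
    intro j
    induction j with
    | zero => simpa using ha
    | succ k ih =>
        have : f • ((f ^ k) • a) ∈ (CRS h).image (fun c => f • c) :=
          Finset.mem_image_of_mem _ ih
        rw [hfix] at this
        simpa [pow_succ', mul_smul] using this
  -- pigeonhole: some nonzero power of f fixes a
  have : ∃ j k : ℕ, j ≠ k ∧ (f ^ j) • a = (f ^ k) • a := by
    have : ¬ Function.Injective (fun j : ℕ => (⟨(f ^ j) • a, hmem j⟩ : {x // x ∈ CRS h})) :=
      not_injective_infinite_finite _
    rw [Function.not_injective_iff] at this
    obtain ⟨j, k, hjk, hne⟩ := this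
    exact ⟨j, k, hne, by simpa using hjk⟩
  obtain ⟨j, k, hjk, heq⟩ := this
  have hn : ((j : ℤ) - k) ≠ 0 := by
    simp only [sub_ne_zero]
    exact_mod_cast hjk
  have hfixa : (f ^ ((j : ℤ) - k)) • a = a := by
    have h1 : (f ^ (j : ℤ)) • a = (f ^ (k : ℤ)) • a := by
      simpa [zpow_natCast] using heq
    have : (f ^ (-(k : ℤ))) • (f ^ (j : ℤ)) • a = (f ^ (-(k : ℤ))) • (f ^ (k : ℤ)) • a := by
      rw [h1]
    rw [← mul_smul, ← mul_smul, ← zpow_add, ← zpow_add, neg_add_cancel, zpow_zero, one_smul] at this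
    rw [sub_eq_add_neg, add_comm]
    exact this
  exact hkey f a ⟨b, hb, hib⟩ ((j : ℤ) - k) hn hfixa
end
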